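/- Let (Ω, 𝒜, P) be a probability space, 𝒢 ⊆ 𝒜 a sub-σ-algebra, Z : Ω → ℝ a random variable whose law is the standard normal distribution and which is independent of 𝒢, and H : Ω → ℝ a 𝒢-measurable random variable with values in [0,1]. Then for every η ∈ [0,1], E[1_{{Φ(Z) ≤ η·H} ∪ {1 − Φ(Z) ≤ η·(1 − H)}} | 𝒢] = η almost surely. -/

import Mathlib

open Set MeasureTheory ProbabilityTheory Filter Topology

/-- The standard normal cumulative distribution function. -/
noncomputable def Phi (x : ℝ) : ℝ :=
  ((ProbabilityTheory.gaussianReal 0 1) (Set.Iic x)).toReal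

section PhiAux

lemma Phi_eq_cdf : Phi = cdf (gaussianReal 0 1) :=
  funext fun x => (cdf_eq_real _ x).symm

lemma gauss_ne_zero {s : Set ℝ} (hs : volume s ≠ 0) : gaussianReal 0 1 s ≠ 0 :=
  fun h => hs (gaussianReal_absolutelyContinuous' 0 one_ne_zero h)

lemma gauss_singleton (x : ℝ) : gaussianReal 0 1 {x} = 0 :=
  gaussianReal_absolutelyContinuous 0 one_ne_zero (Real.volume_singleton)

lemma gauss_Iic (x : ℝ) : gaussianReal 0 1 (Iic x) = ENNReal.ofReal (Phi x) := by
  rw [Phi_eq_cdf, ofReal_cdf]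

lemma Phi_mono : Monotone Phi := by rw [Phi_eq_cdf]; exact monotone_cdf _

lemma Phi_pos (x : ℝ) : 0 < Phi x := by
  refine ENNReal.toReal_pos ?_ (measure_ne_top _ _)
  exact gauss_ne_zero (by simp [Real.volume_Iic])

lemma Phi_lt_one (x : ℝ) : Phi x < 1 := by
  have h : gaussianReal 0 1 (Iic x) < 1 := by
    have hIoi : gaussianReal 0 1 (Ioi x) ≠ 0 := gauss_ne_zero (by simp [Real.volume_Ioi])
    calc gaussianReal 0 1 (Iic x)
        < gaussianReal 0 1 (Iic x) + gaussianReal 0 1 (Ioi x) :=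
          ENNReal.lt_add_right (measure_ne_top _ _) hIoi
      _ = 1 := by
          have := measure_add_measure_compl (μ := gaussianReal 0 1) (measurableSet_Iic (a := x))
          rwa [compl_Iic, measure_univ] at this
  have := ENNReal.toReal_lt_toReal (measure_ne_top _ _) ENNReal.one_ne_top |>.mpr h
  simpa [Phi] using this

lemma Phi_strictMono : StrictMono Phi := by
  intro x y hxy
  have hsub : gaussianReal 0 1 (Ioc x y) ≠ 0 :=
    gauss_ne_zero (by simp [Real.volume_Ioc, hxy, sub_pos.mpr hxy])
  have hsplit : gaussianReal 0 1 (Iic y) = gaussianReal 0 1 (Iic x) + gaussianReal 0 1 (Ioc x y) := by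
    rw [← measure_union (by exact Iic_disjoint_Ioc le_rfl) measurableSet_Ioc, Iic_union_Ioc_eq_Iic hxy.le]
  have hlt : gaussianReal 0 1 (Iic x) < gaussianReal 0 1 (Iic y) := by
    rw [hsplit]
    exact ENNReal.lt_add_right (measure_ne_top _ _) hsub
  exact ENNReal.toReal_lt_toReal (measure_ne_top _ _) (measure_ne_top _ _) |>.mpr hlt

lemma Phi_continuous : Continuous Phi := by
  rw [continuous_iff_continuousAt]
  intro x
  have hmono : Monotone (cdf (gaussianReal 0 1)) := monotone_cdf _
  rw [Phi_eq_cdf, hmono.continuousAt_iff_leftLim_eq_rightLim]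
  have hright : Function.rightLim (cdf (gaussianReal 0 1)) x = cdf (gaussianReal 0 1) x := by
    rw [← hmono.continuousWithinAt_Ioi_iff_rightLim_eq]
    exact ((cdf (gaussianReal 0 1)).right_continuous x).mono Ioi_subset_Ici_self
  have hleft : Function.leftLim (cdf (gaussianReal 0 1)) x = cdf (gaussianReal 0 1) x := by
    have hsing := (cdf (gaussianReal 0 1)).measure_singleton x
    rw [measure_cdf, gauss_singleton] at hsing
    have h1 : cdf (gaussianReal 0 1) x - Function.leftLim (cdf (gaussianReal 0 1)) x ≤ 0 :=
      ENNReal.ofReal_eq_zero.mp hsing.symm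
    have h2 := hmono.leftLim_le (le_refl x)
    linarith
  rw [hleft, hright]

lemma exists_Phi_eq {a : ℝ} (h0 : 0 < a) (h1 : a < 1) : ∃ x, Phi x = a := by
  have hbot : Tendsto Phi atBot (𝓝 0) := by rw [Phi_eq_cdf]; exact tendsto_cdf_atBot _
  have htop : Tendsto Phi atTop (𝓝 1) := by rw [Phi_eq_cdf]; exact tendsto_cdf_atTop _
  obtain ⟨x₀, hx₀⟩ := (hbot.eventually_lt_const h0).exists
  obtain ⟨x₁, hx₁⟩ := (htop.eventually_const_lt h1).exists
  exact intermediate_value_univ x₀ x₁ Phi_continuous ⟨hx₀.le, hx₁.le⟩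

lemma gauss_Iio (x : ℝ) : gaussianReal 0 1 (Iio x) = ENNReal.ofReal (Phi x) := by
  refine le_antisymm ((measure_mono Iio_subset_Iic_self).trans_eq (gauss_Iic x)) ?_
  rw [← gauss_Iic]
  calc gaussianReal 0 1 (Iic x) ≤ gaussianReal 0 1 (Iio x ∪ {x}) := by
        rw [Iio_union_right]
    _ ≤ gaussianReal 0 1 (Iio x) + gaussianReal 0 1 {x} := measure_union_le _ _
    _ = gaussianReal 0 1 (Iio x) := by rw [gauss_singleton, add_zero]

lemma gauss_Ici (x : ℝ) : gaussianReal 0 1 (Ici x) = ENNReal.ofReal (1 - Phi x) := by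
  rw [← compl_Iio, measure_compl measurableSet_Iio (measure_ne_top _ _), measure_univ, gauss_Iio,
    ENNReal.ofReal_sub _ (Phi_pos x).le, ENNReal.ofReal_one]

/-- Key measure computation for the two-sided event. -/
lemma gauss_union (a b : ℝ) (ha : 0 ≤ a) (hb : 0 ≤ b) (hab : a + b ≤ 1) :
    gaussianReal 0 1 ({z | Phi z ≤ a} ∪ {z | 1 - Phi z ≤ b}) = ENNReal.ofReal (a + b) := by
  have hSa : ∀ {a : ℝ}, 0 < a → a < 1 → ∃ x, {z | Phi z ≤ a} = Iic x ∧ Phi x = a := by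
    intro a h0 h1
    obtain ⟨x, hx⟩ := exists_Phi_eq h0 h1
    exact ⟨x, by ext z; simp [← hx, Phi_strictMono.le_iff_le], hx⟩
  have hTb : ∀ {b : ℝ}, 0 < b → b < 1 → ∃ y, {z | 1 - Phi z ≤ b} = Ici y ∧ Phi y = 1 - b := by
    intro b h0 h1
    obtain ⟨y, hy⟩ := exists_Phi_eq (a := 1 - b) (by linarith) (by linarith)
    refine ⟨y, ?_, hy⟩
    ext z
    simp only [mem_setOf_eq, mem_Ici, ← Phi_strictMono.le_iff_le (a := y), hy]
    constructor <;> intro h <;> linarith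
  rcases eq_or_lt_of_le ha with rfl | ha'
  · have hSe : {z : ℝ | Phi z ≤ (0:ℝ)} = ∅ := by
      ext z; simp [not_le.mpr (Phi_pos z)]
    rw [hSe, empty_union, zero_add]
    rcases eq_or_lt_of_le hb with rfl | hb'
    · have he : {z : ℝ | (1:ℝ) ≤ Phi z} = ∅ := by
        ext z
        simp only [mem_setOf_eq, mem_empty_iff_false, iff_false, not_le]
        exact Phi_lt_one z
      simp only [sub_nonpos, he, measure_empty, ENNReal.ofReal_zero]
    · rcases eq_or_lt_of_le hab with hb1 | hb1
      · have hbe : b = 1 := by linarith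
        subst hbe
        have : {z : ℝ | 1 - Phi z ≤ (1:ℝ)} = univ := by
          ext z; simp only [mem_setOf_eq, mem_univ, iff_true]; linarith [Phi_pos z]
        rw [this, measure_univ, ENNReal.ofReal_one]
      · obtain ⟨y, hy, hPy⟩ := hTb hb' (by linarith)
        rw [hy, gauss_Ici, hPy]
        congr 1; ring
  · rcases eq_or_lt_of_le hb with rfl | hb'
    · have hTe : {z : ℝ | 1 - Phi z ≤ (0:ℝ)} = ∅ := by
        ext z; simp only [mem_setOf_eq, mem_empty_iff_false, iff_false, not_le]
        linarith [Phi_lt_one z]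
      rw [hTe, union_empty, add_zero]
      rcases eq_or_lt_of_le hab with ha1 | ha1
      · have hae : a = 1 := by linarith
        subst hae
        have : {z : ℝ | Phi z ≤ (1:ℝ)} = univ := by
          ext z; simp only [mem_setOf_eq, mem_univ, iff_true]; linarith [Phi_lt_one z]
        rw [this, measure_univ, ENNReal.ofReal_one]
      · obtain ⟨x, hx, hPx⟩ := hSa ha' (by linarith)
        rw [hx, gauss_Iic, hPx]
    · have ha1 : a < 1 := by linarith
      have hb1 : b < 1 := by linarith
      obtain ⟨x, hx, hPx⟩ := hSa ha' ha1
      obtain ⟨y, hy, hPy⟩ := hTb hb' hb1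
      have hxy : x ≤ y := by
        rw [← Phi_strictMono.le_iff_le, hPx, hPy]; linarith
      rcases eq_or_lt_of_le hxy with rfl | hxy'
      · rw [hx, hy, Iic_union_Ici, measure_univ]
        have hab1 : a + b = 1 := by linarith
        rw [hab1, ENNReal.ofReal_one]
      · rw [hx, hy, measure_union (Iic_disjoint_Ici.mpr (not_le.mpr hxy')) measurableSet_Ici,
          gauss_Iic, gauss_Ici, hPx, hPy, show (1:ℝ) - (1 - b) = b from by ring,
          ← ENNReal.ofReal_add ha hb]

end PhiAux

section Freezing

lemma freeze_measure {Ω α : Type*} {mΩ : MeasurableSpace Ω} [mα : MeasurableSpace α]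
    (P : Measure Ω) [IsProbabilityMeasure P] (W : Ω → α) (hW : Measurable W)
    (Z : Ω → ℝ) (hZ : Measurable Z)
    (hindep : IndepFun W Z P)
    (C : Set (α × ℝ)) (hC : MeasurableSet C) :
    P ((fun ω => (W ω, Z ω)) ⁻¹' C) = ∫⁻ ω, (P.map Z) (Prod.mk (W ω) ⁻¹' C) ∂P := by
  haveI : IsProbabilityMeasure (P.map Z) := Measure.isProbabilityMeasure_map hZ.aemeasurable
  haveI : IsProbabilityMeasure (P.map W) := Measure.isProbabilityMeasure_map hW.aemeasurable
  have hmap : P.map (fun ω => (W ω, Z ω)) = (P.map W).prod (P.map Z) :=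
    (indepFun_iff_map_prod_eq_prod_map_map hW.aemeasurable hZ.aemeasurable).mp hindep
  rw [← Measure.map_apply (hW.prodMk hZ) hC, hmap, Measure.prod_apply hC,
    lintegral_map (measurable_measure_prodMk_left hC) hW]

lemma key_measure {Ω α : Type*} {mΩ : MeasurableSpace Ω} [mα : MeasurableSpace α]
    (P : Measure Ω) [IsProbabilityMeasure P] (W : Ω → α) (hW : Measurable W)
    (Z : Ω → ℝ) (hZ : Measurable Z) (hZlaw : P.map Z = gaussianReal 0 1)
    (hindep : IndepFun W Z P)
    (G : α → ℝ) (hG : Measurable G) (hGvals : ∀ x, G x ∈ Icc (0:ℝ) 1)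
    (η : ℝ) (hη0 : 0 ≤ η) (hη1 : η ≤ 1)
    (s : Set α) (hs : MeasurableSet s) :
    P (({ω | Phi (Z ω) ≤ η * G (W ω)} ∪ {ω | 1 - Phi (Z ω) ≤ η * (1 - G (W ω))}) ∩ W ⁻¹' s)
      = ENNReal.ofReal η * P (W ⁻¹' s) := by
  have hPhiM : Measurable Phi := Phi_continuous.measurable
  set C : Set (α × ℝ) :=
    (Prod.fst ⁻¹' s) ∩
      ({p : α × ℝ | Phi p.2 ≤ η * G p.1} ∪ {p : α × ℝ | 1 - Phi p.2 ≤ η * (1 - G p.1)})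
    with hCdef
  have h1 : MeasurableSet {p : α × ℝ | Phi p.2 ≤ η * G p.1} :=
    measurableSet_le (hPhiM.comp measurable_snd) ((hG.comp measurable_fst).const_mul η)
  have h2 : MeasurableSet {p : α × ℝ | 1 - Phi p.2 ≤ η * (1 - G p.1)} :=
    measurableSet_le (measurable_const.sub (hPhiM.comp measurable_snd))
      ((measurable_const.sub (hG.comp measurable_fst)).const_mul η)
  have hC : MeasurableSet C := (measurable_fst hs).inter (h1.union h2)
  have hpre : ({ω | Phi (Z ω) ≤ η * G (W ω)} ∪ {ω | 1 - Phi (Z ω) ≤ η * (1 - G (W ω))})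
      ∩ W ⁻¹' s = (fun ω => (W ω, Z ω)) ⁻¹' C := by
    ext ω
    simp only [hCdef, mem_inter_iff, mem_union, mem_setOf_eq, mem_preimage]
    tauto
  have hslice : ∀ ω, (P.map Z) (Prod.mk (W ω) ⁻¹' C)
      = (W ⁻¹' s).indicator (fun _ => ENNReal.ofReal η) ω := by
    intro ω
    by_cases hω : W ω ∈ s
    · have hset : Prod.mk (W ω) ⁻¹' C
          = {z | Phi z ≤ η * G (W ω)} ∪ {z | 1 - Phi z ≤ η * (1 - G (W ω))} := by
        ext z
        simp only [hCdef, mem_preimage, mem_inter_iff, mem_union, mem_setOf_eq, hω, true_and]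
      have h01 := hGvals (W ω)
      rw [hset, hZlaw, indicator_of_mem (show ω ∈ W ⁻¹' s from hω),
        gauss_union (η * G (W ω)) (η * (1 - G (W ω))) (mul_nonneg hη0 h01.1)
          (mul_nonneg hη0 (by linarith [h01.2])) (le_of_eq_of_le (by ring) hη1)]
      congr 1
      ring
    · have hset : Prod.mk (W ω) ⁻¹' C = ∅ := by
        ext z
        simp only [hCdef, mem_preimage, mem_inter_iff, mem_union, mem_setOf_eq, hω,
          false_and, mem_empty_iff_false]
      rw [hset, measure_empty, indicator_of_notMem (show ω ∉ W ⁻¹' s from hω)]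
  rw [hpre, freeze_measure P W hW Z hZ hindep C hC]
  simp_rw [hslice]
  rw [lintegral_indicator (hW hs), setLIntegral_const]

lemma integral_helper {Ω : Type*} {mΩ : MeasurableSpace Ω} (P : Measure Ω) [IsFiniteMeasure P]
    (A s : Set Ω) (hA : MeasurableSet A) (η : ℝ) (hη0 : 0 ≤ η)
    (hkey : P (A ∩ s) = ENNReal.ofReal η * P s) :
    ∫ x in s, (fun _ => η) x ∂P = ∫ x in s, A.indicator (fun _ => (1:ℝ)) x ∂P := by
  rw [setIntegral_const, setIntegral_indicator hA, setIntegral_const, smul_eq_mul, smul_eq_mul,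
    mul_one, inter_comm s A, measureReal_def, measureReal_def, hkey, ENNReal.toReal_mul, ENNReal.toReal_ofReal hη0, mul_comm]

lemma aux_integrable {Ω : Type*} {mΩ : MeasurableSpace Ω} (P : Measure Ω) [IsFiniteMeasure P]
    (A : Set Ω) (hA : MeasurableSet A) : Integrable (A.indicator fun _ => (1:ℝ)) P :=
  (integrable_const (1:ℝ)).indicator hA

lemma aux_integrableOn {Ω : Type*} {mΩ : MeasurableSpace Ω} (P : Measure Ω) (η : ℝ)
    (s : Set Ω) (hfin : P s < ⊤) : IntegrableOn (fun _ : Ω => η) s P :=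
  integrableOn_const hfin.ne

end Freezing

/-- If `Z` is standard normal and independent of the sub-σ-algebra `𝒢`, and
`H ∈ [0,1]` is `𝒢`-measurable, then the conditional probability given `𝒢` of the event
`{Φ(Z) ≤ η·H} ∪ {1 − Φ(Z) ≤ η·(1 − H)}` equals `η` almost surely. -/
theorem condexp_weighted_twoSided_event
    {Ω : Type*} {mΩ : MeasurableSpace Ω} (P : Measure Ω) [IsProbabilityMeasure P]
    (𝒢 : MeasurableSpace Ω) (h𝒢 : 𝒢 ≤ mΩ)
    (Z : Ω → ℝ) (hZ : Measurable[mΩ] Z)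
    (hZlaw : @MeasureTheory.Measure.map Ω ℝ mΩ _ Z P = gaussianReal 0 1)
    (hindep : @ProbabilityTheory.Indep Ω
      (MeasurableSpace.comap Z Real.measurableSpace) 𝒢 mΩ P)
    (H : Ω → ℝ) (hH : Measurable[𝒢] H) (hHvals : ∀ ω, H ω ∈ Icc (0:ℝ) 1) :
    ∀ η ∈ Icc (0:ℝ) 1,
      P[({ω | Phi (Z ω) ≤ η * H ω} ∪ {ω | 1 - Phi (Z ω) ≤ η * (1 - H ω)}).indicator
          (fun _ => (1:ℝ)) | 𝒢]
        =ᵐ[P] fun _ => η := by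
  intro η hη
  obtain ⟨hη0, hη1⟩ := hη
  haveI : SigmaFinite (P.trim h𝒢) := inferInstance
  set A := {ω | Phi (Z ω) ≤ η * H ω} ∪ {ω | 1 - Phi (Z ω) ≤ η * (1 - H ω)} with hAdef
  have hHm : Measurable[mΩ] H := hH.mono h𝒢 le_rfl
  have hPhiM : Measurable Phi := Phi_continuous.measurable
  have hAm : MeasurableSet[mΩ] A :=
    (measurableSet_le (hPhiM.comp hZ) (hHm.const_mul η)).union
      (measurableSet_le (measurable_const.sub (hPhiM.comp hZ))
        ((measurable_const.sub hHm).const_mul η))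
  have hIndep : @IndepFun Ω Ω ℝ mΩ 𝒢 Real.measurableSpace id Z P := by
    have h1 := hindep.symm
    rw [← MeasurableSpace.comap_id (m := 𝒢)] at h1
    exact h1
  refine (ae_eq_condExp_of_forall_setIntegral_eq h𝒢 ?_ ?_ ?_ ?_).symm
  · exact aux_integrable P A hAm
  · exact fun s hs hfin => aux_integrableOn P η s hfin
  · intro s hs hfin
    have hkey := key_measure (mα := 𝒢) P id (measurable_id'' h𝒢) Z hZ hZlaw hIndep
      H hH hHvals η hη0 hη1 s hs
    simp only [id, Set.preimage_id] at hkey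
    exact integral_helper P A s hAm η hη0 hkey
  · exact stronglyMeasurable_const.aestronglyMeasurable
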